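/- Let k_z, K_r ∈ ℝ with K² = k_z² + K_r², and let F be smooth with F_ss + F_yy + K_r² F = 0. Then p = sin(k_z z)·F(x−Vt, y) + (β(sin(Kz)M + cos(Kz) − 1)/K² − V)·y satisfies the Charney–Obukhov equation ∂_t Δp + ∂_x p ∂_y Δp − ∂_y p ∂_x Δp + β ∂_x p = 0 for any constant M. -/

import Mathlib

open Real

noncomputable section

/-- Partial derivative in `t` of `p t x y z`. -/
def pdt (p : ℝ → ℝ → ℝ → ℝ → ℝ) (t x y z : ℝ) : ℝ := deriv (fun t' => p t' x y z) t
/-- Partial derivative in `x`. -/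
def pdx (p : ℝ → ℝ → ℝ → ℝ → ℝ) (t x y z : ℝ) : ℝ := deriv (fun x' => p t x' y z) x
/-- Partial derivative in `y`. -/
def pdy (p : ℝ → ℝ → ℝ → ℝ → ℝ) (t x y z : ℝ) : ℝ := deriv (fun y' => p t x y' z) y
/-- Partial derivative in `z`. -/
def pdz (p : ℝ → ℝ → ℝ → ℝ → ℝ) (t x y z : ℝ) : ℝ := deriv (fun z' => p t x y z') z

/-- Spatial Laplacian in `(x, y, z)`. -/
def lap3d (p : ℝ → ℝ → ℝ → ℝ → ℝ) (t x y z : ℝ) : ℝ :=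
  pdx (pdx p) t x y z + pdy (pdy p) t x y z + pdz (pdz p) t x y z

/-- Charney–Obukhov operator. -/
def CO (β : ℝ) (p : ℝ → ℝ → ℝ → ℝ → ℝ) (t x y z : ℝ) : ℝ :=
  pdt (lap3d p) t x y z + pdx p t x y z * pdy (lap3d p) t x y z
    - pdy p t x y z * pdx (lap3d p) t x y z + β * pdx p t x y z

/-- Boundary condition operator `p_{zt} − p_y p_{zx} + p_x p_{zy}`. -/
def Bop (p : ℝ → ℝ → ℝ → ℝ → ℝ) (t x y z : ℝ) : ℝ :=
  pdt (pdz p) t x y z - pdy p t x y z * pdx (pdz p) t x y z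
    + pdx p t x y z * pdy (pdz p) t x y z

/-- Partial derivative in the first variable `s` of a two-variable function. -/
def dS (F : ℝ → ℝ → ℝ) (s y : ℝ) : ℝ := deriv (fun s' => F s' y) s
/-- Partial derivative in the second variable `y` of a two-variable function. -/
def dY (F : ℝ → ℝ → ℝ) (s y : ℝ) : ℝ := deriv (fun y' => F s y') y

/-- Smoothness of a two-variable function. -/
def Smooth2 (F : ℝ → ℝ → ℝ) : Prop := ContDiff ℝ (⊤ : ℕ∞) (fun q : ℝ × ℝ => F q.1 q.2)

/- ### Auxiliary lemmas -/

lemma hasDerivAt_fst' {F : ℝ → ℝ → ℝ} (hF : Smooth2 F) (s y : ℝ) :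
    HasDerivAt (fun s' => F s' y)
      (fderiv ℝ (fun q : ℝ × ℝ => F q.1 q.2) (s, y) (1, 0)) s := by
  have h := (hF.differentiable (by simp) (s, y)).hasFDerivAt
  exact h.comp_hasDerivAt s ((hasDerivAt_id s).prodMk (hasDerivAt_const s y))

lemma hasDerivAt_snd' {F : ℝ → ℝ → ℝ} (hF : Smooth2 F) (s y : ℝ) :
    HasDerivAt (fun y' => F s y')
      (fderiv ℝ (fun q : ℝ × ℝ => F q.1 q.2) (s, y) (0, 1)) y := by
  have h := (hF.differentiable (by simp) (s, y)).hasFDerivAt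
  exact h.comp_hasDerivAt y ((hasDerivAt_const y s).prodMk (hasDerivAt_id y))

lemma hasDerivAt_dS {F : ℝ → ℝ → ℝ} (hF : Smooth2 F) (s y : ℝ) :
    HasDerivAt (fun s' => F s' y) (dS F s y) s := by
  have h := hasDerivAt_fst' hF s y; rwa [dS, h.deriv]

lemma hasDerivAt_dY {F : ℝ → ℝ → ℝ} (hF : Smooth2 F) (s y : ℝ) :
    HasDerivAt (fun y' => F s y') (dY F s y) y := by
  have h := hasDerivAt_snd' hF s y; rwa [dY, h.deriv]

lemma smooth_dS {F : ℝ → ℝ → ℝ} (hF : Smooth2 F) : Smooth2 (dS F) := by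
  have h2 : ContDiff ℝ (⊤ : ℕ∞) (fun q : ℝ × ℝ =>
      fderiv ℝ (fun q : ℝ × ℝ => F q.1 q.2) q ((1 : ℝ), (0 : ℝ))) :=
    (hF.fderiv_right (by simp)).clm_apply contDiff_const
  have he : (fun q : ℝ × ℝ => dS F q.1 q.2) = fun q : ℝ × ℝ =>
      fderiv ℝ (fun q : ℝ × ℝ => F q.1 q.2) q ((1 : ℝ), (0 : ℝ)) := by
    funext q; exact (hasDerivAt_fst' hF q.1 q.2).deriv
  rw [Smooth2, he]; exact h2

lemma smooth_dY {F : ℝ → ℝ → ℝ} (hF : Smooth2 F) : Smooth2 (dY F) := by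
  have h2 : ContDiff ℝ (⊤ : ℕ∞) (fun q : ℝ × ℝ =>
      fderiv ℝ (fun q : ℝ × ℝ => F q.1 q.2) q ((0 : ℝ), (1 : ℝ))) :=
    (hF.fderiv_right (by simp)).clm_apply contDiff_const
  have he : (fun q : ℝ × ℝ => dY F q.1 q.2) = fun q : ℝ × ℝ =>
      fderiv ℝ (fun q : ℝ × ℝ => F q.1 q.2) q ((0 : ℝ), (1 : ℝ)) := by
    funext q; exact (hasDerivAt_snd' hF q.1 q.2).deriv
  rw [Smooth2, he]; exact h2

section shapes
variable {G : ℝ → ℝ → ℝ} (a h : ℝ → ℝ) (V : ℝ)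

lemma pdx_shape (hG : Smooth2 G) :
    pdx (fun t x y z => a z * G (x - V * t) y + h z * y)
      = fun t x y z => a z * dS G (x - V * t) y + (0 : ℝ) * y := by
  funext t x y z
  have h1 : HasDerivAt (fun x' => x' - V * t) 1 x := (hasDerivAt_id x).sub_const _
  have h2 : HasDerivAt (fun x' => a z * G (x' - V * t) y + h z * y)
      (a z * (dS G (x - V * t) y * 1)) x :=
    (((hasDerivAt_dS hG (x - V * t) y).comp x h1).const_mul (a z)).add_const (h z * y)
  simp only [pdx]
  rw [h2.deriv]; ring

lemma pdy_shape (hG : Smooth2 G) :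
    pdy (fun t x y z => a z * G (x - V * t) y + h z * y)
      = fun t x y z => a z * dY G (x - V * t) y + h z := by
  funext t x y z
  have h2 : HasDerivAt (fun y' => a z * G (x - V * t) y' + h z * y')
      (a z * dY G (x - V * t) y + h z * 1) y :=
    ((hasDerivAt_dY hG (x - V * t) y).const_mul (a z)).add
      ((hasDerivAt_id y).const_mul (h z))
  simp only [pdy]
  rw [h2.deriv]; ring

lemma pdy_shape2 (hG : Smooth2 G) :
    pdy (fun t x y z => a z * G (x - V * t) y + h z)
      = fun t x y z => a z * dY G (x - V * t) y + (0 : ℝ) * y := by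
  funext t x y z
  have h2 := ((hasDerivAt_dY hG (x - V * t) y).const_mul (a z)).add_const (h z)
  simp only [pdy]
  rw [h2.deriv]; ring

lemma pdt_shape (hG : Smooth2 G) :
    pdt (fun t x y z => a z * G (x - V * t) y + h z * y)
      = fun t x y z => a z * (dS G (x - V * t) y * -V) := by
  funext t x y z
  have h1 : HasDerivAt (fun t' : ℝ => x - V * t') (-V) t := by
    simpa using (((hasDerivAt_id t).const_mul V).const_sub x)
  have h2 : HasDerivAt (fun t' => a z * G (x - V * t') y + h z * y)
      (a z * (dS G (x - V * t) y * -V)) t :=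
    (((hasDerivAt_dS hG (x - V * t) y).comp t h1).const_mul (a z)).add_const (h z * y)
  simp only [pdt]
  rw [h2.deriv]

lemma pdz_shape (a' h' : ℝ → ℝ) (ha : ∀ z, HasDerivAt a (a' z) z)
    (hh : ∀ z, HasDerivAt h (h' z) z) :
    pdz (fun t x y z => a z * G (x - V * t) y + h z * y)
      = fun t x y z => a' z * G (x - V * t) y + h' z * y := by
  funext t x y z
  have h2 := ((ha z).mul_const (G (x - V * t) y)).add ((hh z).mul_const y)
  simp only [pdz]
  exact h2.deriv
end shapes

/-- Solution 2 satisfies the Charney–Obukhov equation. -/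
theorem stmt_3 (F : ℝ → ℝ → ℝ) (kz Kr K V β M : ℝ)
    (hK : K ^ 2 = kz ^ 2 + Kr ^ 2) (hK0 : K ≠ 0) (hF : Smooth2 F)
    (hHelm : ∀ s y, dS (dS F) s y + dY (dY F) s y + Kr ^ 2 * F s y = 0) :
    ∀ t x y z, CO β
      (fun t x y z => Real.sin (kz * z) * F (x - V * t) y
        + (β * (Real.sin (K * z) * M + Real.cos (K * z) - 1) / K ^ 2 - V) * y)
      t x y z = 0 := by
  intro t x y z
  set p : ℝ → ℝ → ℝ → ℝ → ℝ := fun t x y z => Real.sin (kz * z) * F (x - V * t) y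
        + (β * (Real.sin (K * z) * M + Real.cos (K * z) - 1) / K ^ 2 - V) * y with hp
  -- z-direction derivative facts
  have hsin : ∀ c w : ℝ, HasDerivAt (fun w => Real.sin (c * w)) (Real.cos (c * w) * c) w := by
    intro c w
    have h := (Real.hasDerivAt_sin (c * w)).comp w ((hasDerivAt_id w).const_mul c)
    simpa [Function.comp_def] using h
  have hcos : ∀ c w : ℝ, HasDerivAt (fun w => Real.cos (c * w)) (-Real.sin (c * w) * c) w := by
    intro c w
    have h := (Real.hasDerivAt_cos (c * w)).comp w ((hasDerivAt_id w).const_mul c)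
    simpa [Function.comp_def] using h
  have ha1 : ∀ w : ℝ, HasDerivAt (fun w => Real.sin (kz * w)) (Real.cos (kz * w) * kz) w :=
    hsin kz
  have ha2 : ∀ w : ℝ, HasDerivAt (fun w => Real.cos (kz * w) * kz)
      (-(kz ^ 2) * Real.sin (kz * w)) w := by
    intro w
    have h := (hcos kz w).mul_const kz
    exact h.congr_deriv (by ring)
  have hg : ∀ w : ℝ, HasDerivAt
      (fun w => β * (Real.sin (K * w) * M + Real.cos (K * w) - 1) / K ^ 2 - V)
      (β * (Real.cos (K * w) * K * M - Real.sin (K * w) * K) / K ^ 2) w := by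
    intro w
    have h := (((((hsin K w).mul_const M).add (hcos K w)).sub_const 1).const_mul
      β).div_const (K ^ 2) |>.sub_const V
    exact h.congr_deriv (by ring)
  have hg1 : ∀ w : ℝ, HasDerivAt
      (fun w => β * (Real.cos (K * w) * K * M - Real.sin (K * w) * K) / K ^ 2)
      (-(β * (Real.sin (K * w) * M + Real.cos (K * w)))) w := by
    intro w
    have h := ((((hcos K w).mul_const K).mul_const M).sub ((hsin K w).mul_const
      K)).const_mul β |>.div_const (K ^ 2)
    refine h.congr_deriv ?_
    field_simp
    ring
  -- first derivatives of p
  have E1 : pdx p = fun t x y z => Real.sin (kz * z) * dS F (x - V * t) y + (0 : ℝ) * y :=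
    pdx_shape (fun z => Real.sin (kz * z))
      (fun z => β * (Real.sin (K * z) * M + Real.cos (K * z) - 1) / K ^ 2 - V) V hF
  have E2 : pdy p = fun t x y z => Real.sin (kz * z) * dY F (x - V * t) y
      + (β * (Real.sin (K * z) * M + Real.cos (K * z) - 1) / K ^ 2 - V) :=
    pdy_shape (fun z => Real.sin (kz * z))
      (fun z => β * (Real.sin (K * z) * M + Real.cos (K * z) - 1) / K ^ 2 - V) V hF
  have E3 : pdz p = fun t x y z => (Real.cos (kz * z) * kz) * F (x - V * t) y
      + (β * (Real.cos (K * z) * K * M - Real.sin (K * z) * K) / K ^ 2) * y :=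
    pdz_shape (fun z => Real.sin (kz * z))
      (fun z => β * (Real.sin (K * z) * M + Real.cos (K * z) - 1) / K ^ 2 - V) V
      (fun z => Real.cos (kz * z) * kz)
      (fun z => β * (Real.cos (K * z) * K * M - Real.sin (K * z) * K) / K ^ 2) ha1 hg
  -- second derivatives
  have E11 : pdx (pdx p) = fun t x y z =>
      Real.sin (kz * z) * dS (dS F) (x - V * t) y + (0 : ℝ) * y := by
    rw [E1]
    exact pdx_shape (fun z => Real.sin (kz * z)) (fun _ => (0 : ℝ)) V (smooth_dS hF)
  have E22 : pdy (pdy p) = fun t x y z =>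
      Real.sin (kz * z) * dY (dY F) (x - V * t) y + (0 : ℝ) * y := by
    rw [E2]
    exact pdy_shape2 (fun z => Real.sin (kz * z))
      (fun z => β * (Real.sin (K * z) * M + Real.cos (K * z) - 1) / K ^ 2 - V) V
      (smooth_dY hF)
  have E33 : pdz (pdz p) = fun t x y z =>
      (-(kz ^ 2) * Real.sin (kz * z)) * F (x - V * t) y
        + (-(β * (Real.sin (K * z) * M + Real.cos (K * z)))) * y := by
    rw [E3]
    exact pdz_shape (fun z => Real.cos (kz * z) * kz)
      (fun z => β * (Real.cos (K * z) * K * M - Real.sin (K * z) * K) / K ^ 2) V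
      (fun z => -(kz ^ 2) * Real.sin (kz * z))
      (fun z => -(β * (Real.sin (K * z) * M + Real.cos (K * z)))) ha2 hg1
  -- the Laplacian
  have Elap : lap3d p = fun t x y z =>
      (-(K ^ 2) * Real.sin (kz * z)) * F (x - V * t) y
        + (-(β * (Real.sin (K * z) * M + Real.cos (K * z)))) * y := by
    funext t x y z
    simp only [lap3d, E11, E22, E33]
    have hh := hHelm (x - V * t) y
    linear_combination Real.sin (kz * z) * hh
      + Real.sin (kz * z) * F (x - V * t) y * hK
  -- derivatives of the Laplacian
  have E4 : pdt (lap3d p) = fun t x y z =>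
      (-(K ^ 2) * Real.sin (kz * z)) * (dS F (x - V * t) y * -V) := by
    rw [Elap]
    exact pdt_shape (fun z => -(K ^ 2) * Real.sin (kz * z))
      (fun z => -(β * (Real.sin (K * z) * M + Real.cos (K * z)))) V hF
  have E5 : pdx (lap3d p) = fun t x y z =>
      (-(K ^ 2) * Real.sin (kz * z)) * dS F (x - V * t) y + (0 : ℝ) * y := by
    rw [Elap]
    exact pdx_shape (fun z => -(K ^ 2) * Real.sin (kz * z))
      (fun z => -(β * (Real.sin (K * z) * M + Real.cos (K * z)))) V hF
  have E6 : pdy (lap3d p) = fun t x y z =>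
      (-(K ^ 2) * Real.sin (kz * z)) * dY F (x - V * t) y
        + (-(β * (Real.sin (K * z) * M + Real.cos (K * z)))) := by
    rw [Elap]
    exact pdy_shape (fun z => -(K ^ 2) * Real.sin (kz * z))
      (fun z => -(β * (Real.sin (K * z) * M + Real.cos (K * z)))) V hF
  simp only [CO, E1, E2, E4, E5, E6]
  field_simp
  ring
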